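/- arXiv:2104.14793 — 5 statements merged into one kernel-verified Lean document; each statement's English description precedes it below -/
import Mathlib

section
/- Let L : ℝ × ℝⁿ × ℝⁿ → ℝ be smooth and let q : ℝ → ℝⁿ be a smooth solution of the Euler–Lagrange equation d/dt[∂_{q̇}L(t,q(t),q̇(t))] = ∂_q L(t,q(t),q̇(t)). Let q_λ(t) be a smooth family of curves (smooth in (λ,t)) with q_0(t) = q(t) for all t. Then the function t ↦ ∂_{q̇}L(t,q(t),q̇(t)) · ∂_λ q_λ(t)|_{λ=0} − ∫_{t₀}^{t} ∂_λ L(s,q_λ(s),q̇_λ(s))|_{λ=0} ds is constant in t. -/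
/-!
Let `p = ∂_{q̇}L(t, q, q̇)` be the momentum along `q` and `u = ∂_λ q_λ|_{λ=0}` the variation field.
The Euler–Lagrange equation says `ṗ = ∂_q L`, so `d/dt ⟪p, u⟫ = ⟪∂_q L, u⟫ + ⟪p, u̇⟫`. As the mixed
partials of `(λ, t) ↦ q_λ(t)` commute, `u̇ = ∂_λ q̇_λ|_{λ=0}`, and the chain rule identifies the
right-hand side with `∂_λ L(t, q_λ, q̇_λ)|_{λ=0}`. The fundamental theorem of calculus concludes.
-/

open scoped RealInnerProductSpace
open InnerProductSpace ContinuousLinearMap Function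

section PartialDerivatives

variable {F : Type*} [NormedAddCommGroup F] [NormedSpace ℝ F] {f : ℝ → ℝ → F}

lemma hasDerivAt_left_of_differentiableAt_uncurry {l t : ℝ}
    (hf : DifferentiableAt ℝ (uncurry f) (l, t)) :
    HasDerivAt (fun l => f l t) (fderiv ℝ (uncurry f) (l, t) (1, 0)) l :=
  (hf.hasFDerivAt.comp_hasDerivAt l ((hasDerivAt_id' l).prodMk (hasDerivAt_const l t)) :)

lemma hasDerivAt_right_of_differentiableAt_uncurry {l t : ℝ}
    (hf : DifferentiableAt ℝ (uncurry f) (l, t)) :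
    HasDerivAt (f l) (fderiv ℝ (uncurry f) (l, t) (0, 1)) t :=
  (hf.hasFDerivAt.comp_hasDerivAt t ((hasDerivAt_const t l).prodMk (hasDerivAt_id' t)) :)

lemma ContDiff.uncurry_deriv_left {m n : WithTop ℕ∞} (hf : ContDiff ℝ n (uncurry f))
    (hmn : m + 1 ≤ n) :
    ContDiff ℝ m (uncurry fun l t => deriv (fun l => f l t) l) := by
  have hdf : uncurry (fun l t => deriv (fun l => f l t) l)
      = fun p => fderiv ℝ (uncurry f) p (1, 0) := funext fun p =>
    (hasDerivAt_left_of_differentiableAt_uncurry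
      (hf.differentiable (by rintro rfl; simp at hmn) p)).deriv
  rw [hdf]
  exact (hf.fderiv_right hmn).clm_apply contDiff_const

lemma ContDiff.uncurry_deriv_right {m n : WithTop ℕ∞} (hf : ContDiff ℝ n (uncurry f))
    (hmn : m + 1 ≤ n) :
    ContDiff ℝ m (uncurry fun l t => deriv (f l) t) := by
  have hdf : uncurry (fun l t => deriv (f l) t) = fun p => fderiv ℝ (uncurry f) p (0, 1) :=
    funext fun p =>
      (hasDerivAt_right_of_differentiableAt_uncurry
        (hf.differentiable (by rintro rfl; simp at hmn) p)).deriv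
  rw [hdf]
  exact (hf.fderiv_right hmn).clm_apply contDiff_const

lemma ContDiff.of_uncurry_left {n : WithTop ℕ∞} (hf : ContDiff ℝ n (uncurry f)) (t : ℝ) :
    ContDiff ℝ n fun l => f l t :=
  hf.comp (contDiff_id.prodMk contDiff_const)

lemma ContDiff.of_uncurry_right {n : WithTop ℕ∞} (hf : ContDiff ℝ n (uncurry f)) (l : ℝ) :
    ContDiff ℝ n (f l) :=
  hf.comp (contDiff_const.prodMk contDiff_id)

-- Schwarz: the two mixed partial derivatives of a `C²` function agree.
lemma ContDiff.hasDerivAt_deriv_left (hf : ContDiff ℝ 2 (uncurry f)) (l t : ℝ) :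
    HasDerivAt (fun t => deriv (fun l => f l t) l) (deriv (fun l => deriv (f l) t) l) t := by
  set D := fderiv ℝ (uncurry f)
  have hf' : Differentiable ℝ (uncurry f) := hf.differentiable two_ne_zero
  have hD : Differentiable ℝ D :=
    (hf.fderiv_right (m := 1) (by norm_num)).differentiable one_ne_zero
  have hleft : HasDerivAt (fun t => D (l, t) (1, 0)) (fderiv ℝ D (l, t) (0, 1) (1, 0)) t :=
    (apply ℝ F ((1, 0) : ℝ × ℝ)).hasFDerivAt.comp_hasDerivAt t
      (hasDerivAt_right_of_differentiableAt_uncurry (f := fun l t => D (l, t)) (hD (l, t)))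
  have hright : HasDerivAt (fun l => D (l, t) (0, 1)) (fderiv ℝ D (l, t) (1, 0) (0, 1)) l :=
    (apply ℝ F ((0, 1) : ℝ × ℝ)).hasFDerivAt.comp_hasDerivAt l
      (hasDerivAt_left_of_differentiableAt_uncurry (f := fun l t => D (l, t)) (hD (l, t)))
  have hsymm : fderiv ℝ D (l, t) (0, 1) (1, 0) = fderiv ℝ D (l, t) (1, 0) (0, 1) :=
    hf.contDiffAt.isSymmSndFDerivAt (by simp [minSmoothness_of_isRCLikeNormedField]) _ _
  have hu : (fun t => deriv (fun l => f l t) l) = fun t => D (l, t) (1, 0) := funext fun t =>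
    (hasDerivAt_left_of_differentiableAt_uncurry (hf' (l, t))).deriv
  have hv : (fun l => deriv (f l) t) = fun l => D (l, t) (0, 1) := funext fun l =>
    (hasDerivAt_right_of_differentiableAt_uncurry (hf' (l, t))).deriv
  rw [hu, hv, hright.deriv, ← hsymm]
  exact hleft

end PartialDerivatives

section Lagrangian

variable {E : Type*} [NormedAddCommGroup E] [InnerProductSpace ℝ E] [CompleteSpace E]
  {L : ℝ → E → E → ℝ} {t : ℝ} {x v : E}

lemma hasGradientAt_position
    (hL : DifferentiableAt ℝ (fun p : ℝ × E × E => L p.1 p.2.1 p.2.2) (t, x, v)) :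
    HasGradientAt (fun y => L t y v)
      ((toDual ℝ E).symm ((fderiv ℝ (fun p : ℝ × E × E => L p.1 p.2.1 p.2.2) (t, x, v)).comp
        ((0 : E →L[ℝ] ℝ).prod (inl ℝ E E)))) x := by
  have hj : HasFDerivAt (fun y : E => (t, y, v)) ((0 : E →L[ℝ] ℝ).prod (inl ℝ E E)) x :=
    (hasFDerivAt_const t x).prodMk ((hasFDerivAt_id x).prodMk (hasFDerivAt_const v x))
  exact (hL.hasFDerivAt.comp x hj).hasGradientAt

lemma hasGradientAt_velocity
    (hL : DifferentiableAt ℝ (fun p : ℝ × E × E => L p.1 p.2.1 p.2.2) (t, x, v)) :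
    HasGradientAt (fun w => L t x w)
      ((toDual ℝ E).symm ((fderiv ℝ (fun p : ℝ × E × E => L p.1 p.2.1 p.2.2) (t, x, v)).comp
        ((0 : E →L[ℝ] ℝ).prod (inr ℝ E E)))) v := by
  have hj : HasFDerivAt (fun w : E => (t, x, w)) ((0 : E →L[ℝ] ℝ).prod (inr ℝ E E)) v :=
    (hasFDerivAt_const t v).prodMk ((hasFDerivAt_const x v).prodMk (hasFDerivAt_id v))
  exact (hL.hasFDerivAt.comp v hj).hasGradientAt

lemma inner_gradient_position_add_inner_gradient_velocity
    (hL : DifferentiableAt ℝ (fun p : ℝ × E × E => L p.1 p.2.1 p.2.2) (t, x, v)) (a b : E) :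
    ⟪gradient (fun y => L t y v) x, a⟫ + ⟪gradient (fun w => L t x w) v, b⟫
      = fderiv ℝ (fun p : ℝ × E × E => L p.1 p.2.1 p.2.2) (t, x, v) (0, a, b) := by
  rw [(hasGradientAt_position hL).gradient, (hasGradientAt_velocity hL).gradient,
    toDual_symm_apply, toDual_symm_apply, ContinuousLinearMap.comp_apply,
    ContinuousLinearMap.comp_apply, ← map_add]
  congr 1
  simp

lemma hasDerivAt_lagrangian_comp {γ η : ℝ → E} {γ' η' : E} {l : ℝ}
    (hγ : HasDerivAt γ γ' l) (hη : HasDerivAt η η' l)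
    (hL : DifferentiableAt ℝ (fun p : ℝ × E × E => L p.1 p.2.1 p.2.2) (t, γ l, η l)) :
    HasDerivAt (fun l => L t (γ l) (η l))
      (⟪gradient (fun y => L t y (η l)) (γ l), γ'⟫
        + ⟪gradient (fun w => L t (γ l) w) (η l), η'⟫) l := by
  rw [inner_gradient_position_add_inner_gradient_velocity hL]
  exact (hL.hasFDerivAt.comp_hasDerivAt l ((hasDerivAt_const l t).prodMk (hγ.prodMk hη)) :)

lemma differentiable_gradient_velocity
    (hL : ContDiff ℝ 2 (fun p : ℝ × E × E => L p.1 p.2.1 p.2.2)) {γ η : ℝ → E}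
    (hγ : Differentiable ℝ γ) (hη : Differentiable ℝ η) :
    Differentiable ℝ fun t => gradient (fun w => L t (γ t) w) (η t) := by
  have hgrad : (fun t => gradient (fun w => L t (γ t) w) (η t)) = fun t =>
      (toDual ℝ E).symm ((fderiv ℝ (fun p : ℝ × E × E => L p.1 p.2.1 p.2.2) (t, γ t, η t)).comp
        ((0 : E →L[ℝ] ℝ).prod (inr ℝ E E))) :=
    funext fun t => (hasGradientAt_velocity (hL.differentiable two_ne_zero _)).gradient
  have hDL := (hL.fderiv_right (m := 1) (by norm_num)).differentiable one_ne_zero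
  rw [hgrad]
  exact (toDual ℝ E).symm.differentiable.comp
    ((hDL.comp (differentiable_id.prodMk (hγ.prodMk hη))).clm_comp (differentiable_const _))

end Lagrangian

lemma continuous_deriv_lagrangian_variation {E : Type*} [NormedAddCommGroup E]
    [NormedSpace ℝ E] {L : ℝ → E → E → ℝ} {Q : ℝ → ℝ → E}
    (hL : ContDiff ℝ 1 (fun p : ℝ × E × E => L p.1 p.2.1 p.2.2)) (hQ : ContDiff ℝ 2 (uncurry Q))
    (l₀ : ℝ) : Continuous fun s => deriv (fun l => L s (Q l s) (deriv (Q l) s)) l₀ := by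
  have hΛ : ContDiff ℝ 1 (uncurry fun l s => L s (Q l s) (deriv (Q l) s)) :=
    hL.comp (contDiff_snd.prodMk
      ((hQ.of_le one_le_two).prodMk (hQ.uncurry_deriv_right (by norm_num))))
  exact ((hΛ.uncurry_deriv_left (m := 0) (by norm_num)).of_uncurry_right l₀).continuous

theorem hasDerivAt_inner_momentum_variation {E : Type*} [NormedAddCommGroup E]
    [InnerProductSpace ℝ E] [CompleteSpace E] {L : ℝ → E → E → ℝ} {Q : ℝ → ℝ → E} {t : ℝ}
    (hL : ContDiff ℝ 2 (fun p : ℝ × E × E => L p.1 p.2.1 p.2.2)) (hQ : ContDiff ℝ 2 (uncurry Q))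
    (hEL : deriv (fun s => gradient (fun v => L s (Q 0 s) v) (deriv (Q 0) s)) t
      = gradient (fun x => L t x (deriv (Q 0) t)) (Q 0 t)) :
    HasDerivAt
      (fun t => ⟪gradient (fun v => L t (Q 0 t) v) (deriv (Q 0) t), deriv (fun l => Q l t) 0⟫)
      (deriv (fun l => L t (Q l t) (deriv (Q l) t)) 0) t := by
  have hQ' : ContDiff ℝ 1 (uncurry fun l t => deriv (Q l) t) :=
    hQ.uncurry_deriv_right (by norm_num)
  have hmomentum : HasDerivAt (fun t => gradient (fun v => L t (Q 0 t) v) (deriv (Q 0) t))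
      (gradient (fun x => L t x (deriv (Q 0) t)) (Q 0 t)) t := by
    rw [← hEL]
    exact (differentiable_gradient_velocity hL
      ((hQ.of_uncurry_right 0).differentiable two_ne_zero)
      ((hQ'.of_uncurry_right 0).differentiable one_ne_zero) t).hasDerivAt
  have hvariation := hasDerivAt_lagrangian_comp (t := t)
    ((hQ.of_uncurry_left t).differentiable two_ne_zero 0).hasDerivAt
    ((hQ'.of_uncurry_left t).differentiable one_ne_zero 0).hasDerivAt
    (hL.differentiable two_ne_zero _)
  rw [hvariation.deriv, add_comm]
  exact hmomentum.inner ℝ (hQ.hasDerivAt_deriv_left 0 t)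

theorem stmt_0_general {n : ℕ}
    (L : ℝ → EuclideanSpace ℝ (Fin n) → EuclideanSpace ℝ (Fin n) → ℝ)
    (hL : ContDiff ℝ (⊤ : ℕ∞)
      (fun p : ℝ × EuclideanSpace ℝ (Fin n) × EuclideanSpace ℝ (Fin n) =>
        L p.1 p.2.1 p.2.2))
    (q : ℝ → EuclideanSpace ℝ (Fin n))
    (hEL : ∀ t : ℝ,
      deriv (fun s => gradient (fun v => L s (q s) v) (deriv q s)) t
        = gradient (fun x => L t x (deriv q t)) (q t))
    (Q : ℝ → ℝ → EuclideanSpace ℝ (Fin n))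
    (hQ : ContDiff ℝ (⊤ : ℕ∞) (fun p : ℝ × ℝ => Q p.1 p.2))
    (hQ0 : ∀ t, Q 0 t = q t)
    (t₀ : ℝ) :
    ∃ c : ℝ, ∀ t : ℝ,
      ⟪gradient (fun v => L t (q t) v) (deriv q t),
        deriv (fun l => Q l t) 0⟫
      - (∫ s in t₀..t, deriv (fun l => L s (Q l s) (deriv (Q l) s)) 0)
      = c := by
  obtain rfl : Q 0 = q := funext hQ0
  have hL₂ := hL.of_le (m := 2) (WithTop.coe_le_coe.mpr le_top)
  have hQ₂ : ContDiff ℝ 2 (uncurry Q) := hQ.of_le (WithTop.coe_le_coe.mpr le_top)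
  refine ⟨⟪gradient (fun v => L t₀ (Q 0 t₀) v) (deriv (Q 0) t₀), deriv (fun l => Q l t₀) 0⟫,
    fun t => ?_⟩
  rw [intervalIntegral.integral_eq_sub_of_hasDerivAt
    (fun s _ => hasDerivAt_inner_momentum_variation hL₂ hQ₂ (hEL s))
    ((continuous_deriv_lagrangian_variation (hL₂.of_le one_le_two) hQ₂ 0).intervalIntegrable _ _),
    sub_sub_cancel]

/-- Theorem 1 (nonlocal constant of motion for second-order Lagrangian systems):
along any solution of the Euler–Lagrange equation and any smooth family of
perturbed motions `Q` with `Q 0 = q`, the function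
`t ↦ ∂_{q̇}L · ∂_λ q_λ |_{λ=0} − ∫_{t₀}^t ∂_λ L |_{λ=0}` is constant. -/
theorem stmt_0 {n : ℕ}
    (L : ℝ → EuclideanSpace ℝ (Fin n) → EuclideanSpace ℝ (Fin n) → ℝ)
    (hL : ContDiff ℝ (⊤ : ℕ∞)
      (fun p : ℝ × EuclideanSpace ℝ (Fin n) × EuclideanSpace ℝ (Fin n) =>
        L p.1 p.2.1 p.2.2))
    (q : ℝ → EuclideanSpace ℝ (Fin n)) (hq : ContDiff ℝ (⊤ : ℕ∞) q)
    (hEL : ∀ t : ℝ,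
      deriv (fun s => gradient (fun v => L s (q s) v) (deriv q s)) t
        = gradient (fun x => L t x (deriv q t)) (q t))
    (Q : ℝ → ℝ → EuclideanSpace ℝ (Fin n))
    (hQ : ContDiff ℝ (⊤ : ℕ∞) (fun p : ℝ × ℝ => Q p.1 p.2))
    (hQ0 : ∀ t, Q 0 t = q t)
    (t₀ : ℝ) :
    ∃ c : ℝ, ∀ t : ℝ,
      ⟪gradient (fun v => L t (q t) v) (deriv q t),
        deriv (fun l => Q l t) 0⟫
      - (∫ s in t₀..t, deriv (fun l => L s (Q l s) (deriv (Q l) s)) 0)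
      = c :=
  stmt_0_general L hL q hEL Q hQ hQ0 t₀
end

section
/- Let m, k > 0 and U : ℝⁿ → ℝ smooth with U ≥ 0. Then every maximal solution of m q̈ = −k q̇ − ∇U(q) is defined for all t ∈ ℝ (global existence in the past and in the future). -/
/-!
Along a solution the energy `m/2 ‖q̇‖² + U(q)` has derivative `-k ‖q̇‖²`, which is at most
`2|k|/m` times the energy because `U ≥ 0`. By Grönwall the energy, hence the velocity and the
position, stay bounded on bounded time intervals. The phase curve `(q, q̇)` then has bounded
derivative, so it converges at a finite end of its interval and Picard–Lindelöf continues it past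
that end, contradicting maximality. Reversing time turns `k` into `-k` and handles the left end.
-/

open Set Filter Topology Pointwise

lemma Set.OrdConnected.exists_Ico_subset_of_bddAbove {I : Set ℝ} (hIo : IsOpen I)
    (hIc : I.OrdConnected) (hbdd : BddAbove I) {a : ℝ} (ha : a ∈ I) :
    ∃ b, a < b ∧ Ico a b ⊆ I ∧ I ⊆ Iio b := by
  have hlub : IsLUB I (sSup I) := isLUB_csSup ⟨a, ha⟩ hbdd
  have hIb : I ⊆ Iio (sSup I) := fun t ht ↦ by
    obtain ⟨s, hts, hs⟩ := Filter.nonempty_of_mem (inter_mem_nhdsWithin (Ioi t) (hIo.mem_nhds ht))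
    exact (mem_Ioi.1 hts).trans_le (hlub.1 hs)
  refine ⟨sSup I, hIb ha, fun t ht ↦ ?_, hIb⟩
  obtain ⟨s, hs, hts, -⟩ := hlub.exists_between ht.2
  exact hIc.out ha hs ⟨ht.1, hts.le⟩

lemma Set.OrdConnected.neg {I : Set ℝ} (hI : I.OrdConnected) : (-I).OrdConnected :=
  hI.preimage_anti fun _ _ h ↦ neg_le_neg h

section AutonomousODE

variable {E : Type*} [NormedAddCommGroup E] [NormedSpace ℝ E]

lemma exists_tendsto_nhdsLT_of_norm_hasDerivAt_le [CompleteSpace E] {c c' : ℝ → E} {a b M : ℝ}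
    (hab : a < b) (hc : ∀ t ∈ Ioo a b, HasDerivAt c (c' t) t)
    (hM : ∀ t ∈ Ioo a b, ‖c' t‖ ≤ M) : ∃ L, Tendsto c (𝓝[<] b) (𝓝 L) := by
  have hlip : LipschitzOnWith M.toNNReal c (Ioo a b) :=
    (convex_Ioo a b).lipschitzOnWith_of_nnnorm_hasDerivWithin_le
      (fun t ht ↦ (hc t ht).hasDerivWithinAt) fun t ht ↦ by
        rw [← NNReal.coe_le_coe, coe_nnnorm, Real.coe_toNNReal']
        exact (hM t ht).trans (le_max_left _ _)
  have hcauchy : Cauchy (map c (𝓝[<] b)) :=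
    (cauchy_nhds.mono nhdsWithin_le_nhds).map_of_le hlip.uniformContinuousOn
      (le_principal_iff.2 (Ioo_mem_nhdsLT hab))
  exact CompleteSpace.complete hcauchy

/-- The derivative at `b` from the left exists because `F ∘ c → F (g b)`. -/
lemma hasDerivAt_ite_lt_of_tendsto_nhdsLT {F : E → E} (hF : Continuous F) {c g : ℝ → E}
    {a b : ℝ} (hab : a < b) (hc : ∀ t ∈ Ioo a b, HasDerivAt c (F (c t)) t)
    (hL : Tendsto c (𝓝[<] b) (𝓝 (g b))) (hg : HasDerivAt g (F (g b)) b) :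
    HasDerivAt (fun t ↦ if t < b then c t else g t) (F (g b)) b := by
  set R : ℝ → E := fun t ↦ if t < b then c t else g t
  have hRb : R b = g b := if_neg (lt_irrefl b)
  have hRc : EqOn R c (Ioo a b) := fun t ht ↦ if_pos ht.2
  have hR : ∀ t ∈ Ioo a b, HasDerivAt R (F (c t)) t := fun t ht ↦
    (hc t ht).congr_of_eventuallyEq (eventuallyEq_of_mem (Ioo_mem_nhds ht.1 ht.2) hRc)
  have hleft : HasDerivWithinAt R (F (g b)) (Iic b) b := by
    apply hasDerivWithinAt_Iic_of_tendsto_deriv (s := Ioo a b)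
    · exact fun t ht ↦ (hR t ht).differentiableAt.differentiableWithinAt
    · rw [ContinuousWithinAt, hRb]
      exact (hL.mono_left (nhdsWithin_mono _ Ioo_subset_Iio_self)).congr'
        (eventually_nhdsWithin_of_forall fun t ht ↦ (hRc ht).symm)
    · exact Ioo_mem_nhdsLT hab
    · refine ((hF.tendsto _).comp hL).congr' ?_
      filter_upwards [Ioo_mem_nhdsLT hab] with t ht
      exact (hR t ht).deriv.symm
  have hright : HasDerivWithinAt R (F (g b)) (Ici b) b :=
    hg.hasDerivWithinAt.congr (fun t ht ↦ if_neg (not_lt.2 ht)) hRb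
  rw [← hasDerivWithinAt_univ, ← Iic_union_Ici]
  exact hleft.union hright

/-- Glue `c` at `b` to a local solution through `L`. -/
theorem exists_hasDerivAt_extension_of_tendsto_nhdsLT [CompleteSpace E] {F : E → E}
    (hF : ContDiff ℝ 1 F) {I : Set ℝ} {c : ℝ → E} {a b : ℝ} {L : E} (hab : a < b)
    (haI : Ioo a b ⊆ I) (hIb : I ⊆ Iio b) (hc : ∀ t ∈ I, HasDerivAt c (F (c t)) t)
    (hL : Tendsto c (𝓝[<] b) (𝓝 L)) :
    ∃ ε > 0, ∃ R : ℝ → E, (∀ t ∈ I ∪ Ioo (b - ε) (b + ε), HasDerivAt R (F (R t)) t) ∧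
      EqOn R c I := by
  obtain ⟨g, hgb, ε₀, hε₀, hg⟩ :=
    hF.contDiffAt.exists_forall_mem_closedBall_exists_eq_forall_mem_Ioo_hasDerivAt₀ (x₀ := L) b
  set ε := min ε₀ (b - a)
  have hε : 0 < ε := lt_min hε₀ (by linarith)
  have hεa : a ≤ b - ε := by linarith [min_le_right ε₀ (b - a)]
  have hεg : Ioo (b - ε) (b + ε) ⊆ Ioo (b - ε₀) (b + ε₀) :=
    Ioo_subset_Ioo (by linarith [min_le_left ε₀ (b - a)]) (by linarith [min_le_left ε₀ (b - a)])
  set R : ℝ → E := fun t ↦ if t < b then c t else g t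
  have hRc : ∀ t < b, R t = c t := fun t ht ↦ if_pos ht
  have hRg : ∀ t, b ≤ t → R t = g t := fun t ht ↦ if_neg (not_lt.2 ht)
  have hleft : ∀ t ∈ I, HasDerivAt R (F (R t)) t := fun t ht ↦ by
    rw [hRc t (hIb ht)]
    exact (hc t ht).congr_of_eventuallyEq
      (eventually_of_mem (Iio_mem_nhds (hIb ht)) fun s hs ↦ hRc s hs)
  have hcI : Ioo (b - ε) b ⊆ I := fun t ht ↦ haI ⟨hεa.trans_lt ht.1, ht.2⟩
  refine ⟨ε, hε, R, fun t ht ↦ ?_, fun t ht ↦ hRc t (hIb ht)⟩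
  rcases lt_trichotomy t b with htb | rfl | hbt
  · exact hleft t (ht.elim id fun ht ↦ hcI ⟨ht.1, htb⟩)
  · rw [hRg t le_rfl]
    refine hasDerivAt_ite_lt_of_tendsto_nhdsLT hF.continuous (by linarith : t - ε < t)
      (fun s hs ↦ hc s (hcI hs)) (hgb ▸ hL) ?_
    exact hg t ⟨by linarith, by linarith⟩
  · have htε : t ∈ Ioo (b - ε) (b + ε) := ht.resolve_left fun ht ↦ (hIb ht).not_gt hbt
    rw [hRg t hbt.le]
    exact (hg t (hεg htε)).congr_of_eventuallyEq
      (eventually_of_mem (Ioi_mem_nhds hbt) fun s hs ↦ hRg s hs.le)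

theorem ContDiff.contDiffOn_succ_of_forall_hasDerivAt {F : E → E} {n : ℕ} (hF : ContDiff ℝ n F)
    {J : Set ℝ} (hJ : IsOpen J) {R : ℝ → E} (hR : ∀ t ∈ J, HasDerivAt R (F (R t)) t) :
    ContDiffOn ℝ (n + 1) R J := by
  have hderiv : EqOn (deriv R) (F ∘ R) J := fun t ht ↦ (hR t ht).deriv
  have hdiff : DifferentiableOn ℝ R J :=
    fun t ht ↦ (hR t ht).differentiableAt.differentiableWithinAt
  have step : ∀ {p : ℕ}, ContDiff ℝ p F → ContDiffOn ℝ p R J → ContDiffOn ℝ (p + 1) R J :=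
    fun hFp hRp ↦ (contDiffOn_succ_iff_deriv_of_isOpen hJ).2
      ⟨hdiff, by simp, (hFp.comp_contDiffOn hRp).congr hderiv⟩
  induction n with
  | zero => exact step hF (contDiffOn_zero.2 hdiff.continuousOn)
  | succ n ih => exact_mod_cast step hF (ih (hF.of_le (by norm_cast; omega)))

end AutonomousODE

section DampedMotion

variable {H : Type*} [NormedAddCommGroup H] [InnerProductSpace ℝ H]

noncomputable def dampedEnergy (m : ℝ) (U : H → ℝ) (q : ℝ → H) (t : ℝ) : ℝ :=
  m / 2 * ‖deriv q t‖ ^ 2 + U (q t)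

variable {m k : ℝ} {U : H → ℝ} {I : Set ℝ} {q : ℝ → H} {t : ℝ}

lemma half_mul_norm_deriv_sq_le_dampedEnergy (hU0 : ∀ x, 0 ≤ U x) :
    m / 2 * ‖deriv q t‖ ^ 2 ≤ dampedEnergy m U q t :=
  le_add_of_nonneg_right (hU0 _)

lemma dampedEnergy_nonneg (hm : 0 ≤ m) (hU0 : ∀ x, 0 ≤ U x) : 0 ≤ dampedEnergy m U q t :=
  add_nonneg (by positivity) (hU0 _)

variable [CompleteSpace H]

/-- `m q̈ = -k q̇ - ∇U(q)` as a first-order system in position and velocity. -/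
noncomputable def dampedField (m k : ℝ) (U : H → ℝ) (x : H × H) : H × H :=
  (x.2, m⁻¹ • (-(k • x.2) - gradient U x.1))

def IsDampedSolution (m k : ℝ) (U : H → ℝ) (I : Set ℝ) (q : ℝ → H) : Prop :=
  ContDiffOn ℝ 2 q I ∧ ∀ t ∈ I, m • deriv (deriv q) t = -(k • deriv q t) - gradient U (q t)

lemma contDiff_dampedField (hU : ContDiff ℝ 2 U) : ContDiff ℝ 1 (dampedField m k U) := by
  have hgrad : ContDiff ℝ 1 (gradient U) :=
    (InnerProductSpace.toDual ℝ H).symm.contDiff.comp (hU.fderiv_right (by norm_num))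
  exact contDiff_snd.prodMk
    (((contDiff_snd.const_smul k).neg.sub (hgrad.comp contDiff_fst)).const_smul m⁻¹)

lemma isDampedSolution_fst_of_forall_hasDerivAt (hm : m ≠ 0) (hU : ContDiff ℝ 2 U) {J : Set ℝ}
    (hJ : IsOpen J) {R : ℝ → H × H} (hR : ∀ t ∈ J, HasDerivAt R (dampedField m k U (R t)) t) :
    IsDampedSolution m k U J (fun t ↦ (R t).1) := by
  have hR2 : ContDiffOn ℝ 2 R J :=
    (contDiff_dampedField hU).contDiffOn_succ_of_forall_hasDerivAt hJ hR
  have hfst : ∀ t ∈ J, HasDerivAt (fun s ↦ (R s).1) (R t).2 t := fun t ht ↦ (hR t ht).fst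
  have h₁ : ∀ t ∈ J, deriv (fun s ↦ (R s).1) t = (R t).2 := fun t ht ↦ (hfst t ht).deriv
  refine ⟨contDiff_fst.comp_contDiffOn hR2, fun t ht ↦ ?_⟩
  have h₂ : deriv (deriv fun s ↦ (R s).1) t = (dampedField m k U (R t)).2 := by
    rw [(eventuallyEq_of_mem (hJ.mem_nhds ht) h₁).deriv_eq]
    exact HasDerivAt.deriv (hR t ht).snd
  rw [h₂, h₁ t ht, dampedField, smul_inv_smul₀ hm]

namespace IsDampedSolution

lemma hasDerivAt (hq : IsDampedSolution m k U I q) (hI : IsOpen I) (ht : t ∈ I) :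
    HasDerivAt q (deriv q t) t :=
  ((hq.1.differentiableOn (by norm_num)).differentiableAt (hI.mem_nhds ht)).hasDerivAt

lemma hasDerivAt_deriv (hq : IsDampedSolution m k U I q) (hI : IsOpen I) (ht : t ∈ I) :
    HasDerivAt (deriv q) (deriv (deriv q) t) t :=
  (((hq.1.deriv_of_isOpen hI (m := 1) (by norm_num)).differentiableOn one_ne_zero).differentiableAt
    (hI.mem_nhds ht)).hasDerivAt

lemma hasDerivAt_phase (hq : IsDampedSolution m k U I q) (hm : m ≠ 0) (hI : IsOpen I)
    (ht : t ∈ I) :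
    HasDerivAt (fun s ↦ (q s, deriv q s)) (dampedField m k U (q t, deriv q t)) t := by
  rw [dampedField, ← hq.2 t ht, inv_smul_smul₀ hm]
  exact (hq.hasDerivAt hI ht).prodMk (hq.hasDerivAt_deriv hI ht)

lemma comp_neg (hq : IsDampedSolution m k U I q) :
    IsDampedSolution m (-k) U (-I) (fun t ↦ q (-t)) := by
  refine ⟨hq.1.comp contDiff_neg.contDiffOn fun _ ht ↦ ht, fun t ht ↦ ?_⟩
  have h : deriv (fun s ↦ q (-s)) = fun s ↦ -deriv q (-s) := funext (deriv_comp_neg q)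
  rw [h, deriv.fun_neg, deriv_comp_neg, neg_neg, hq.2 (-t) ht]
  simp

lemma hasDerivAt_dampedEnergy (hq : IsDampedSolution m k U I q) (hI : IsOpen I)
    (hU : Differentiable ℝ U) (ht : t ∈ I) :
    HasDerivAt (dampedEnergy m U q) (-(k * ‖deriv q t‖ ^ 2)) t := by
  have hkin := (hq.hasDerivAt_deriv hI ht).norm_sq
  have hpot : HasDerivAt (fun s ↦ U (q s)) (inner ℝ (gradient U (q t)) (deriv q t)) t := by
    rw [inner_gradient_left]
    exact (hU (q t)).hasFDerivAt.comp_hasDerivAt t (hq.hasDerivAt hI ht)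
  refine ((hkin.const_mul (m / 2)).add hpot).congr_deriv ?_
  have hode := congrArg (inner ℝ (deriv q t)) (hq.2 t ht)
  rw [inner_smul_right, inner_sub_right, inner_neg_right, inner_smul_right,
    real_inner_self_eq_norm_sq] at hode
  rw [real_inner_comm (deriv q t) (gradient U (q t))]
  linear_combination hode

lemma dampedEnergy_le (hq : IsDampedSolution m k U I q) (hI : IsOpen I) (hm : 0 < m)
    (hU : Differentiable ℝ U) (hU0 : ∀ x, 0 ≤ U x) {t₀ : ℝ} (ht₀ : t₀ ≤ t)
    (hsub : Icc t₀ t ⊆ I) :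
    dampedEnergy m U q t ≤ dampedEnergy m U q t₀ * Real.exp (2 * |k| / m * (t - t₀)) := by
  have hE : ∀ s, ‖dampedEnergy m U q s‖ = dampedEnergy m U q s :=
    fun s ↦ Real.norm_of_nonneg (dampedEnergy_nonneg hm.le hU0)
  have hbound : ∀ s ∈ Ico t₀ t,
      ‖-(k * ‖deriv q s‖ ^ 2)‖ ≤ 2 * |k| / m * ‖dampedEnergy m U q s‖ + 0 := by
    intro s _
    rw [hE, add_zero, norm_neg, norm_mul, norm_pow, norm_norm, Real.norm_eq_abs,
      div_mul_eq_mul_div, le_div_iff₀ hm]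
    nlinarith [half_mul_norm_deriv_sq_le_dampedEnergy (m := m) (q := q) (t := s) hU0,
      abs_nonneg k]
  have := norm_le_gronwallBound_of_norm_deriv_right_le
    (fun s hs ↦ (hq.hasDerivAt_dampedEnergy hI hU (hsub hs)).continuousAt.continuousWithinAt)
    (fun s hs ↦ (hq.hasDerivAt_dampedEnergy hI hU (hsub (Ico_subset_Icc_self hs))).hasDerivWithinAt)
    (le_of_eq (hE t₀)) hbound t ⟨ht₀, le_rfl⟩
  rwa [hE, gronwallBound_ε0] at this

end IsDampedSolution

end DampedMotion

namespace IsDampedSolution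

variable {H : Type*} [NormedAddCommGroup H] [InnerProductSpace ℝ H] [FiniteDimensional ℝ H]
  {m k : ℝ} {U : H → ℝ} {I : Set ℝ} {q : ℝ → H}

/-- The energy grows at most exponentially, so on a bounded time interval the velocity stays
bounded, hence so does the position, and `(q, q̇)` remains in a compact set. -/
lemma exists_bound_dampedField (hq : IsDampedSolution m k U I q) (hI : IsOpen I) (hm : 0 < m)
    (hU : ContDiff ℝ 2 U) (hU0 : ∀ x, 0 ≤ U x) {t₀ b : ℝ} (hsub : Ico t₀ b ⊆ I) :
    ∃ M, ∀ t ∈ Ico t₀ b, ‖dampedField m k U (q t, deriv q t)‖ ≤ M := by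
  set B := dampedEnergy m U q t₀ * Real.exp (2 * |k| / m * (b - t₀))
  have hB : 0 ≤ B := mul_nonneg (dampedEnergy_nonneg hm.le hU0) (Real.exp_pos _).le
  set V := √(2 / m * B)
  have hV : ∀ t ∈ Ico t₀ b, ‖deriv q t‖ ≤ V := by
    intro t ht
    have hE : dampedEnergy m U q t ≤ B := by
      refine (hq.dampedEnergy_le hI hm (hU.differentiable (by norm_num)) hU0 ht.1
        fun s hs ↦ hsub ⟨hs.1, hs.2.trans_lt ht.2⟩).trans ?_
      refine mul_le_mul_of_nonneg_left (Real.exp_le_exp.2 ?_) (dampedEnergy_nonneg hm.le hU0)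
      gcongr
      exact ht.2.le
    rw [Real.le_sqrt (norm_nonneg _) (by positivity), div_mul_eq_mul_div, le_div_iff₀ hm]
    nlinarith [half_mul_norm_deriv_sq_le_dampedEnergy (m := m) (q := q) (t := t) hU0]
  have hX : ∀ t ∈ Ico t₀ b, ‖q t - q t₀‖ ≤ V * (b - t₀) := by
    intro t ht
    have hsub' : Icc t₀ t ⊆ Ico t₀ b := fun s hs ↦ ⟨hs.1, hs.2.trans_lt ht.2⟩
    calc ‖q t - q t₀‖ ≤ V * ‖t - t₀‖ :=
          (convex_Icc t₀ t).norm_image_sub_le_of_norm_hasDerivWithin_le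
            (fun s hs ↦ (hq.hasDerivAt hI (hsub (hsub' hs))).hasDerivWithinAt)
            (fun s hs ↦ hV s (hsub' hs)) (left_mem_Icc.2 ht.1) (right_mem_Icc.2 ht.1)
      _ ≤ V * (b - t₀) := by
          rw [Real.norm_of_nonneg (sub_nonneg.2 ht.1)]
          gcongr
          exact ht.2.le
  obtain ⟨M, hM⟩ := ((isCompact_closedBall (q t₀) (V * (b - t₀))).prod
    (isCompact_closedBall 0 V)).exists_bound_of_continuousOn
      (contDiff_dampedField (k := k) hU).continuous.continuousOn
  exact ⟨M, fun t ht ↦ hM _ ⟨by simpa [dist_eq_norm] using hX t ht, by simpa using hV t ht⟩⟩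

theorem exists_extension_of_bddAbove (hq : IsDampedSolution m k U I q) (hIo : IsOpen I)
    (hIc : I.OrdConnected) (hIne : I.Nonempty) (hbdd : BddAbove I) (hm : 0 < m)
    (hU : ContDiff ℝ 2 U) (hU0 : ∀ x, 0 ≤ U x) :
    ∃ J r, IsOpen J ∧ J.OrdConnected ∧ I ⊆ J ∧ ¬ J ⊆ I ∧ IsDampedSolution m k U J r ∧
      EqOn r q I := by
  obtain ⟨t₀, ht₀⟩ := hIne
  obtain ⟨b, ht₀b, hsub, hIb⟩ := hIc.exists_Ico_subset_of_bddAbove hIo hbdd ht₀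
  obtain ⟨M, hM⟩ := hq.exists_bound_dampedField hIo hm hU hU0 hsub
  have hc := fun t (ht : t ∈ I) ↦ hq.hasDerivAt_phase hm.ne' hIo ht
  obtain ⟨L, hL⟩ := exists_tendsto_nhdsLT_of_norm_hasDerivAt_le ht₀b
    (fun t ht ↦ hc t (hsub (Ioo_subset_Ico_self ht))) fun t ht ↦ hM t (Ioo_subset_Ico_self ht)
  obtain ⟨ε, hε, R, hR, hRc⟩ := exists_hasDerivAt_extension_of_tendsto_nhdsLT
    (contDiff_dampedField hU) ht₀b (Ioo_subset_Ico_self.trans hsub) hIb hc hL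
  have hJo : IsOpen (I ∪ Ioo (b - ε) (b + ε)) := hIo.union isOpen_Ioo
  have hJc : (I ∪ Ioo (b - ε) (b + ε)).OrdConnected := by
    refine (hIc.isPreconnected.union (max t₀ (b - ε / 2)) ?_ ?_ isPreconnected_Ioo).ordConnected
    · exact hsub ⟨le_max_left _ _, max_lt ht₀b (by linarith)⟩
    · exact ⟨lt_max_of_lt_right (by linarith), max_lt (by linarith) (by linarith)⟩
  refine ⟨_, fun t ↦ (R t).1, hJo, hJc, subset_union_left,
    fun h ↦ lt_irrefl b (hIb (h (Or.inr ⟨by linarith, by linarith⟩))),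
    isDampedSolution_fst_of_forall_hasDerivAt hm.ne' hU hJo hR, fun t ht ↦ ?_⟩
  simp [hRc ht]

theorem exists_extension_of_bddBelow (hq : IsDampedSolution m k U I q) (hIo : IsOpen I)
    (hIc : I.OrdConnected) (hIne : I.Nonempty) (hbdd : BddBelow I) (hm : 0 < m)
    (hU : ContDiff ℝ 2 U) (hU0 : ∀ x, 0 ≤ U x) :
    ∃ J r, IsOpen J ∧ J.OrdConnected ∧ I ⊆ J ∧ ¬ J ⊆ I ∧ IsDampedSolution m k U J r ∧
      EqOn r q I := by
  obtain ⟨J, r, hJo, hJc, hIJ, hJI, hr, hrq⟩ := hq.comp_neg.exists_extension_of_bddAbove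
    hIo.neg hIc.neg hIne.neg (bddAbove_neg.2 hbdd) hm hU hU0
  refine ⟨-J, fun t ↦ r (-t), hJo.neg, hJc.neg, neg_subset.1 hIJ, fun h ↦ hJI (neg_subset.1 h),
    neg_neg k ▸ hr.comp_neg, fun t ht ↦ ?_⟩
  simpa using hrq (show -t ∈ -I by simpa using ht)

end IsDampedSolution

theorem stmt_6_general {n : ℕ}
    (m k : ℝ) (hm : 0 < m)
    (U : EuclideanSpace ℝ (Fin n) → ℝ) (hU : ContDiff ℝ (⊤ : ℕ∞) U)
    (hU0 : ∀ x, 0 ≤ U x)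
    (I : Set ℝ) (hIo : IsOpen I) (hIc : I.OrdConnected) (hIne : I.Nonempty)
    (q : ℝ → EuclideanSpace ℝ (Fin n))
    (hq : ContDiffOn ℝ 2 q I)
    (hode : ∀ t ∈ I,
      m • deriv (deriv q) t = -(k • deriv q t) - gradient U (q t))
    (hmax : ∀ J : Set ℝ, IsOpen J → J.OrdConnected → I ⊆ J →
      ∀ r : ℝ → EuclideanSpace ℝ (Fin n), ContDiffOn ℝ 2 r J →
        Set.EqOn r q I →
        (∀ t ∈ J, m • deriv (deriv r) t = -(k • deriv r t) - gradient U (r t)) →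
        J ⊆ I) :
    I = Set.univ := by
  have hU2 : ContDiff ℝ 2 U := hU.of_le (WithTop.coe_le_coe.2 le_top)
  have hsol : IsDampedSolution m k U I q := ⟨hq, hode⟩
  refine hIc.isPreconnected.eq_univ_of_unbounded (fun hbdd ↦ ?_) fun hbdd ↦ ?_
  · obtain ⟨J, r, hJo, hJc, hIJ, hJI, hr, hrq⟩ :=
      hsol.exists_extension_of_bddBelow hIo hIc hIne hbdd hm hU2 hU0
    exact hJI (hmax J hJo hJc hIJ r hr.1 hrq hr.2)
  · obtain ⟨J, r, hJo, hJc, hIJ, hJI, hr, hrq⟩ :=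
      hsol.exists_extension_of_bddAbove hIo hIc hIne hbdd hm hU2 hU0
    exact hJI (hmax J hJo hJc hIJ r hr.1 hrq hr.2)

/-- Global existence (Theorem on viscous dissipation): if `m, k > 0` and `U ≥ 0`
is smooth, every maximal solution of `m q̈ = −k q̇ − ∇U(q)` (a solution on an
open interval that admits no proper extension) is defined on all of `ℝ`. -/
theorem stmt_6 {n : ℕ}
    (m k : ℝ) (hm : 0 < m) (hk : 0 < k)
    (U : EuclideanSpace ℝ (Fin n) → ℝ) (hU : ContDiff ℝ (⊤ : ℕ∞) U)
    (hU0 : ∀ x, 0 ≤ U x)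
    (I : Set ℝ) (hIo : IsOpen I) (hIc : I.OrdConnected) (hIne : I.Nonempty)
    (q : ℝ → EuclideanSpace ℝ (Fin n))
    (hq : ContDiffOn ℝ 2 q I)
    (hode : ∀ t ∈ I,
      m • deriv (deriv q) t = -(k • deriv q t) - gradient U (q t))
    (hmax : ∀ J : Set ℝ, IsOpen J → J.OrdConnected → I ⊆ J →
      ∀ r : ℝ → EuclideanSpace ℝ (Fin n), ContDiffOn ℝ 2 r J →
        Set.EqOn r q I →
        (∀ t ∈ J, m • deriv (deriv r) t = -(k • deriv r t) - gradient U (r t)) →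
        J ⊆ I) :
    I = Set.univ :=
  stmt_6_general m k hm U hU hU0 I hIo hIc hIne q hq hode hmax
end

section
/- Let m, k > 0 and U : ℝⁿ → ℝ smooth, and let q : I → ℝⁿ solve m q̈ = −k q̇ − ∇U(q). Then the function t ↦ e^{2kt/m}( m‖q̇(t)‖² + 2U(q(t)) ) + (4k/m)∫_{t}^{t₀} e^{2ks/m} U(q(s)) ds is constant on I, where t₀ ∈ I is fixed. -/
open intervalIntegral

/-!
Along a solution of `m q̈ = -k q̇ - ∇U(q)` the energy `E = m‖q̇‖² + 2U(q)` dissipates at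
rate `E' = 2⟪q̇, m q̈ + ∇U(q)⟫ = -2k‖q̇‖²`. Hence
`(e^{2kt/m} E)' = e^{2kt/m} ((2k/m) E - 2k‖q̇‖²) = (4k/m) e^{2kt/m} U(q)`,
which is exactly cancelled by the derivative of the nonlocal term
`(4k/m) ∫_t^{t₀} e^{2ks/m} U(q(s)) ds`.
A function with zero derivative on an interval is constant there.
-/

theorem Set.OrdConnected.eq_of_hasDerivAt_eq_zero {F : Type*} [NormedAddCommGroup F]
    [NormedSpace ℝ F] {f : ℝ → F} {s : Set ℝ} (hs : s.OrdConnected)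
    (hf : ∀ x ∈ s, HasDerivAt f 0 x) {x y : ℝ} (hx : x ∈ s) (hy : y ∈ s) : f x = f y := by
  have h := hs.convex.norm_image_sub_le_of_norm_hasDerivWithin_le
    (fun z hz => (hf z hz).hasDerivWithinAt) (fun _ _ => norm_zero.le) hy hx
  rwa [zero_mul, norm_le_zero_iff, sub_eq_zero] at h

section

variable {E : Type*} [NormedAddCommGroup E] [InnerProductSpace ℝ E] [CompleteSpace E]

theorem HasGradientAt.comp_hasDerivAt {U : E → ℝ} {g : E} {q : ℝ → E} {v : E} {t : ℝ}
    (hU : HasGradientAt U g (q t)) (hq : HasDerivAt q v t) :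
    HasDerivAt (fun s => U (q s)) (inner ℝ g v) t := by
  have h := hU.hasFDerivAt.comp_hasDerivAt t hq
  simp only [InnerProductSpace.toDual_apply_apply] at h
  exact h

theorem hasDerivAt_energy_of_damped {m k : ℝ} {U : E → ℝ} {q : ℝ → E} {t : ℝ}
    (hU : DifferentiableAt ℝ U (q t)) (hq : DifferentiableAt ℝ q t)
    (hq' : DifferentiableAt ℝ (deriv q) t)
    (hode : m • deriv (deriv q) t = -(k • deriv q t) - gradient U (q t)) :
    HasDerivAt (fun s => m * ‖deriv q s‖ ^ 2 + 2 * U (q s))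
      (-(2 * k * ‖deriv q t‖ ^ 2)) t := by
  have hpower : inner ℝ (deriv q t) (m • deriv (deriv q) t + gradient U (q t))
      = -(k * ‖deriv q t‖ ^ 2) := by
    rw [hode, sub_add_cancel, inner_neg_right, real_inner_smul_right,
      real_inner_self_eq_norm_sq]
  refine ((hq'.hasDerivAt.norm_sq.const_mul m).add
    ((hU.hasGradientAt.comp_hasDerivAt hq.hasDerivAt).const_mul 2)).congr_deriv ?_
  rw [inner_add_right, real_inner_smul_right, real_inner_comm (gradient U (q t))] at hpower
  linear_combination 2 * hpower

noncomputable def dampedInvariant (m k : ℝ) (U : E → ℝ) (q : ℝ → E)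
    (t₀ t : ℝ) : ℝ :=
  Real.exp (2 * k * t / m) * (m * ‖deriv q t‖ ^ 2 + 2 * U (q t))
    + (4 * k / m) * ∫ s in t..t₀, Real.exp (2 * k * s / m) * U (q s)

theorem hasDerivAt_dampedInvariant {m k : ℝ} (hm : m ≠ 0) {U : E → ℝ} {q : ℝ → E}
    {t₀ t : ℝ} (hU : Differentiable ℝ U) (hq : Differentiable ℝ q)
    (hq' : DifferentiableAt ℝ (deriv q) t)
    (hode : m • deriv (deriv q) t = -(k • deriv q t) - gradient U (q t)) :
    HasDerivAt (dampedInvariant m k U q t₀) 0 t := by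
  have hexp : HasDerivAt (fun s => Real.exp (2 * k * s / m))
      (Real.exp (2 * k * t / m) * (2 * k / m)) t := by
    simpa using ((hasDerivAt_id t).const_mul (2 * k) |>.div_const m).exp
  have hcont : Continuous fun s => Real.exp (2 * k * s / m) * U (q s) := by
    have := hU.continuous; have := hq.continuous; fun_prop
  have hint : HasDerivAt (fun s => ∫ u in s..t₀, Real.exp (2 * k * u / m) * U (q u))
      (-(Real.exp (2 * k * t / m) * U (q t))) t :=
    integral_hasDerivAt_left (hcont.intervalIntegrable _ _)
      (hcont.stronglyMeasurableAtFilter _ _) hcont.continuousAt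
  refine ((hexp.mul (hasDerivAt_energy_of_damped (hU _) (hq _) hq' hode)).add
    (hint.const_mul (4 * k / m))).congr_deriv ?_
  field_simp
  ring

end

theorem stmt_7_general {n : ℕ}
    (m k : ℝ) (hm : 0 < m)
    (U : EuclideanSpace ℝ (Fin n) → ℝ) (hU : ContDiff ℝ (⊤ : ℕ∞) U)
    (I : Set ℝ) (hI : I.OrdConnected)
    (q : ℝ → EuclideanSpace ℝ (Fin n)) (hq : ContDiff ℝ (⊤ : ℕ∞) q)
    (hode : ∀ t ∈ I,
      m • deriv (deriv q) t = -(k • deriv q t) - gradient U (q t))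
    (t₀ : ℝ) (ht₀ : t₀ ∈ I) :
    ∃ c : ℝ, ∀ t ∈ I,
      Real.exp (2 * k * t / m) * (m * ‖deriv q t‖ ^ 2 + 2 * U (q t))
        + (4 * k / m) * ∫ s in t..t₀, Real.exp (2 * k * s / m) * U (q s) = c := by
  have hq' : ContDiff ℝ (⊤ : ℕ∞) (deriv q) := (contDiff_infty_iff_deriv.mp hq).2
  refine ⟨dampedInvariant m k U q t₀ t₀, fun t ht =>
    hI.eq_of_hasDerivAt_eq_zero (f := dampedInvariant m k U q t₀) (fun s hs => ?_) ht ht₀⟩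
  exact hasDerivAt_dampedInvariant hm.ne' (hU.differentiable (by simp))
    (hq.differentiable (by simp)) (hq'.differentiable (by simp) s) (hode s hs)

/-- The nonlocal constant of motion for viscous dissipation:
`t ↦ e^{2kt/m}( m‖q̇(t)‖² + 2U(q(t)) ) + (4k/m)∫_t^{t₀} e^{2ks/m} U(q(s)) ds`
is constant along solutions of `m q̈ = −k q̇ − ∇U(q)` (no sign assumption on `U`). -/
theorem stmt_7 {n : ℕ}
    (m k : ℝ) (hm : 0 < m) (hk : 0 < k)
    (U : EuclideanSpace ℝ (Fin n) → ℝ) (hU : ContDiff ℝ (⊤ : ℕ∞) U)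
    (I : Set ℝ) (hI : I.OrdConnected)
    (q : ℝ → EuclideanSpace ℝ (Fin n)) (hq : ContDiff ℝ (⊤ : ℕ∞) q)
    (hode : ∀ t ∈ I,
      m • deriv (deriv q) t = -(k • deriv q t) - gradient U (q t))
    (t₀ : ℝ) (ht₀ : t₀ ∈ I) :
    ∃ c : ℝ, ∀ t ∈ I,
      Real.exp (2 * k * t / m) * (m * ‖deriv q t‖ ^ 2 + 2 * U (q t))
        + (4 * k / m) * ∫ s in t..t₀, Real.exp (2 * k * s / m) * U (q s) = c :=
  stmt_7_general m k hm U hU I hI q hq hode t₀ ht₀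
end

section
/- Let L : ℝ × (ℝⁿ)^{N+1} → ℝ be smooth (arguments t, q, q⁽¹⁾, …, q⁽ᴺ⁾) and let q : ℝ → ℝⁿ be a smooth solution of the higher-order Euler–Lagrange equation ∑_{k=0}^{N} (−1)^k (d/dt)^k ∂_{q^{(k)}} L(t,q,…,q⁽ᴺ⁾) = 0. Let q_λ(t) be a smooth family with q_0 = q. Then the function t ↦ ∑_{j=1}^{N} ∑_{k=0}^{j−1} (−1)^k (d/dt)^k[∂_{q^{(j)}} L(t,q,…,q⁽ᴺ⁾)] · ∂_λ q_λ^{(j−k−1)}(t)|_{λ=0} − ∫_{t₀}^{t} ∂_λ L(s,q_λ,…,q_λ⁽ᴺ⁾)|_{λ=0} ds is constant in t. -/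
open scoped RealInnerProductSpace

/-- The gradient of an `N`-th order Lagrangian `L(t, q, q⁽¹⁾, …, q⁽ᴺ⁾)` with
respect to its block argument `q⁽ʲ⁾`, evaluated along the motion `q` at time `t`. -/
noncomputable def pgrad {n N : ℕ}
    (L : ℝ → (Fin (N + 1) → EuclideanSpace ℝ (Fin n)) → ℝ)
    (q : ℝ → EuclideanSpace ℝ (Fin n)) (j : Fin (N + 1)) (t : ℝ) :
    EuclideanSpace ℝ (Fin n) :=
  gradient
    (fun y => L t (Function.update (fun i : Fin (N + 1) => iteratedDeriv (i : ℕ) q t) j y))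
    (iteratedDeriv (j : ℕ) q t)

/-!
Write `p_j = ∂_{q⁽ʲ⁾}L` along the motion and `u_m(t) = ∂_λ q_λ⁽ᵐ⁾(t)|_{λ=0}`. Since mixed
partial derivatives commute, `u_m' = u_{m+1}`, so repeated integration by parts makes the
derivative of `∑_{k<j} (-1)^k ⟪p_j⁽ᵏ⁾, u_{j-k-1}⟫` telescope to
`⟪p_j, u_j⟫ - (-1)^j ⟪p_j⁽ʲ⁾, u_0⟫`. Summed over `j`, the second terms cancel by the
Euler–Lagrange equation and the first ones are `∂_λ L|_{λ=0}` by the chain rule, which is the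
derivative of the integral.
-/

open Finset Function InnerProductSpace
open scoped ContDiff

namespace HigherOrderLagrangian

section PartialDerivatives

variable {F : Type*} [NormedAddCommGroup F] [NormedSpace ℝ F]

theorem differentiable_of_differentiable_uncurry {E G : Type*} [NormedAddCommGroup E]
    [NormedSpace ℝ E] [NormedAddCommGroup G] [NormedSpace ℝ G] {f : E → G → F}
    (hf : Differentiable ℝ (uncurry f)) (x : E) : Differentiable ℝ (f x) :=
  hf.comp (differentiable_const x |>.prodMk differentiable_id)

theorem hasDerivAt_deriv_comm {f : ℝ → ℝ → F} (hf : ContDiff ℝ 2 (uncurry f)) (l t : ℝ) :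
    HasDerivAt (fun t => deriv (fun l => f l t) l) (deriv (fun l => deriv (f l) t) l) t := by
  set D := fderiv ℝ (uncurry f)
  have hf' : Differentiable ℝ (uncurry f) := hf.differentiable (by norm_num)
  have hD : Differentiable ℝ D := (hf.fderiv_right (m := 1) le_rfl).differentiable one_ne_zero
  have hl : ∀ l t : ℝ, HasDerivAt (fun l => (l, t)) ((1 : ℝ), (0 : ℝ)) l :=
    fun l t => (hasDerivAt_id' l).prodMk (hasDerivAt_const l t)
  have ht : ∀ l t : ℝ, HasDerivAt (fun t => (l, t)) ((0 : ℝ), (1 : ℝ)) t :=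
    fun l t => (hasDerivAt_const t l).prodMk (hasDerivAt_id' t)
  have hfst : ∀ l t, deriv (fun l => f l t) l = D (l, t) (1, 0) := fun l t =>
    (((hf' (l, t)).hasFDerivAt.comp_hasDerivAt l (hl l t)).deriv :)
  have hsnd : ∀ l t, deriv (f l) t = D (l, t) (0, 1) := fun l t =>
    (((hf' (l, t)).hasFDerivAt.comp_hasDerivAt t (ht l t)).deriv :)
  rw [show (fun t => deriv (fun l => f l t) l) = fun t => D (l, t) (1, 0) from funext (hfst l),
    show (fun l => deriv (f l) t) = fun l => D (l, t) (0, 1) from funext fun l => hsnd l t]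
  have hDl : HasDerivAt (fun l => D (l, t)) (fderiv ℝ D (l, t) (1, 0)) l :=
    (hD (l, t)).hasFDerivAt.comp_hasDerivAt l (hl l t)
  have hDt : HasDerivAt (fun t => D (l, t)) (fderiv ℝ D (l, t) (0, 1)) t :=
    (hD (l, t)).hasFDerivAt.comp_hasDerivAt t (ht l t)
  have hsymm : fderiv ℝ D (l, t) (0, 1) (1, 0) = fderiv ℝ D (l, t) (1, 0) (0, 1) :=
    hf.contDiffAt.isSymmSndFDerivAt (by simp) _ _
  rw [(hDl.clm_apply (hasDerivAt_const l ((0 : ℝ), (1 : ℝ)))).deriv, ← hsymm]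
  simpa using hDt.clm_apply (hasDerivAt_const t ((1 : ℝ), (0 : ℝ)))

end PartialDerivatives

section SmoothFamily

variable {F : Type*} [NormedAddCommGroup F] [NormedSpace ℝ F] {Q : ℝ → ℝ → F}

noncomputable def jet (N : ℕ) (q : ℝ → F) (t : ℝ) : Fin (N + 1) → F :=
  fun i => iteratedDeriv i q t

theorem hasDerivAt_iteratedDeriv {f : ℝ → F} (hf : ContDiff ℝ ∞ f) (m : ℕ) (t : ℝ) :
    HasDerivAt (iteratedDeriv m f) (iteratedDeriv (m + 1) f t) t := by
  rw [iteratedDeriv_succ]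
  exact ((contDiff_infty.1 hf (m + 1)).differentiable_iteratedDeriv' m t).hasDerivAt

theorem contDiff_uncurry_iteratedDeriv (hQ : ContDiff ℝ ∞ (uncurry Q)) (m : ℕ) :
    ContDiff ℝ ∞ (uncurry fun l => iteratedDeriv m (Q l)) := by
  induction m with
  | zero => simpa only [iteratedDeriv_zero] using hQ
  | succ m ih =>
    have hfderiv : ContDiff ℝ ∞ fun p : ℝ × ℝ => fderiv ℝ (iteratedDeriv m (Q p.1)) p.2 :=
      ContDiff.fderiv (f := fun p : ℝ × ℝ => iteratedDeriv m (Q p.1))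
        (ih.comp (contDiff_fst.fst.prodMk contDiff_snd)) contDiff_snd (by simp)
    convert hfderiv.clm_apply (contDiff_const (c := (1 : ℝ))) with p
    simp [iteratedDeriv_succ, uncurry]

/-- `∂_λ q_λ⁽ᵐ⁾(t)|_{λ=0}` for the family `q_λ = Q λ`. -/
noncomputable def variation (Q : ℝ → ℝ → F) (m : ℕ) (t : ℝ) : F :=
  deriv (fun l => iteratedDeriv m (Q l) t) 0

theorem hasDerivAt_iteratedDeriv_variation (hQ : ContDiff ℝ ∞ (uncurry Q)) (m : ℕ) (t : ℝ) :
    HasDerivAt (fun l => iteratedDeriv m (Q l) t) (variation Q m t) 0 :=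
  (((contDiff_uncurry_iteratedDeriv hQ m).differentiable (by simp)).comp
    (differentiable_id.prodMk (differentiable_const t)) 0).hasDerivAt

theorem hasDerivAt_variation (hQ : ContDiff ℝ ∞ (uncurry Q)) (m : ℕ) (t : ℝ) :
    HasDerivAt (variation Q m) (variation Q (m + 1) t) t := by
  have h := hasDerivAt_deriv_comm (contDiff_infty.1 (contDiff_uncurry_iteratedDeriv hQ m) 2) 0 t
  simp only [← iteratedDeriv_succ] at h
  exact h

end SmoothFamily

section AlternatingSum

variable {E : Type*} [NormedAddCommGroup E] [InnerProductSpace ℝ E]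

theorem hasDerivAt_sum_alternating_inner {a u : ℕ → ℝ → E}
    (ha : ∀ m t, HasDerivAt (a m) (a (m + 1) t) t) (hu : ∀ m t, HasDerivAt (u m) (u (m + 1) t) t)
    (j : ℕ) (t : ℝ) :
    HasDerivAt (fun t => ∑ k ∈ range j, (-1 : ℝ) ^ k * ⟪a k t, u (j - k - 1) t⟫)
      (⟪a 0 t, u j t⟫ - (-1 : ℝ) ^ j * ⟪a j t, u 0 t⟫) t := by
  set c : ℕ → ℝ := fun k => (-1 : ℝ) ^ k * ⟪a k t, u (j - k) t⟫
  have hterm : ∀ k ∈ range j,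
      HasDerivAt (fun t => (-1 : ℝ) ^ k * ⟪a k t, u (j - k - 1) t⟫) (c k - c (k + 1)) t := by
    intro k hk
    have hjk : j - k - 1 + 1 = j - k := by have := mem_range.mp hk; omega
    have h := ((ha k t).inner ℝ (hu (j - k - 1) t)).const_mul ((-1 : ℝ) ^ k)
    rw [hjk] at h
    refine h.congr_deriv ?_
    simp only [c, pow_succ, ← Nat.sub_add_eq]
    ring
  have h := HasDerivAt.fun_sum hterm
  rw [sum_range_sub'] at h
  simpa [c] using h

end AlternatingSum

section BlockGradient

variable {ι E : Type*} [Fintype ι] [DecidableEq ι] [NormedAddCommGroup E] [InnerProductSpace ℝ E]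
  [CompleteSpace E] {f : (ι → E) → ℝ} {x : ι → E}

theorem gradient_update_eq (hf : DifferentiableAt ℝ f x) (j : ι) :
    gradient (fun y => f (update x j y)) (x j) =
      (toDual ℝ E).symm ((fderiv ℝ f x).comp (.single ℝ (fun _ => E) j)) := by
  have h : HasFDerivAt (fun y => f (update x j y))
      ((fderiv ℝ f x).comp (.single ℝ (fun _ => E) j)) (x j) := by
    have hf' : HasFDerivAt f (fderiv ℝ f x) (update x j (x j)) := by
      simpa using hf.hasFDerivAt
    have hupd : HasFDerivAt (update x j) (.single ℝ (fun _ => E) j) (x j) :=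
      (hasFDerivAt_update x (x j)).congr_fderiv <| by
        ext w i
        rcases eq_or_ne i j with rfl | hij <;> simp [*]
    exact hf'.comp (x j) hupd
  rw [gradient, h.fderiv]

theorem fderiv_apply_eq_sum_inner_gradient_update (hf : DifferentiableAt ℝ f x) (v : ι → E) :
    fderiv ℝ f x v = ∑ j, ⟪gradient (fun y => f (update x j y)) (x j), v j⟫ := by
  simp only [gradient_update_eq hf, toDual_symm_apply, ContinuousLinearMap.sum_comp_single]

end BlockGradient

section Lagrangian

variable {n N : ℕ} {L : ℝ → (Fin (N + 1) → EuclideanSpace ℝ (Fin n)) → ℝ}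

theorem pgrad_eq_toDual_symm (hL : ContDiff ℝ ∞ (uncurry L)) (q : ℝ → EuclideanSpace ℝ (Fin n))
    (j : Fin (N + 1)) (t : ℝ) :
    pgrad L q j t = (toDual ℝ _).symm ((fderiv ℝ (L t) (jet N q t)).comp (.single ℝ _ j)) :=
  gradient_update_eq (differentiable_of_differentiable_uncurry (hL.differentiable (by simp)) t _) j

theorem contDiff_pgrad (hL : ContDiff ℝ ∞ (uncurry L)) {q : ℝ → EuclideanSpace ℝ (Fin n)}
    (hq : ContDiff ℝ ∞ q) (j : Fin (N + 1)) : ContDiff ℝ ∞ (pgrad L q j) := by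
  have hjet : ContDiff ℝ ∞ (jet N q) := contDiff_pi.2 fun i => by
    simpa only [jet, iteratedDeriv_eq_iterate] using hq.iterate_deriv i
  have hfderiv : ContDiff ℝ ∞ fun t => fderiv ℝ (L t) (jet N q t) := hL.fderiv hjet (by simp)
  rw [funext (pgrad_eq_toDual_symm hL q j)]
  exact (toDual ℝ _).symm.contDiff.comp (hfderiv.clm_comp contDiff_const)

theorem deriv_lagrangian_eq_sum_inner_variation (hL : ContDiff ℝ ∞ (uncurry L))
    {Q : ℝ → ℝ → EuclideanSpace ℝ (Fin n)} (hQ : ContDiff ℝ ∞ (uncurry Q)) (t : ℝ) :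
    deriv (fun l => L t (jet N (Q l) t)) 0 = ∑ j, ⟪pgrad L (Q 0) j t, variation Q j t⟫ := by
  have hjet : HasDerivAt (fun l => jet N (Q l) t) (fun i => variation Q i t) 0 :=
    hasDerivAt_pi.2 fun i => hasDerivAt_iteratedDeriv_variation hQ i t
  have hLt :=
    differentiable_of_differentiable_uncurry (hL.differentiable (by simp)) t (jet N (Q 0) t)
  exact (hLt.hasFDerivAt.comp_hasDerivAt 0 hjet).deriv.trans
    (fderiv_apply_eq_sum_inner_gradient_update hLt _)

end Lagrangian

end HigherOrderLagrangian

open HigherOrderLagrangian in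
/-- Scomparin's theorem (nonlocal constants of motion for higher-order Lagrangians):
along any solution of the `N`-th order Euler–Lagrange equation and any smooth
family of perturbed motions `Q` with `Q 0 = q`, the function
`t ↦ ∑_{j=1}^N ∑_{k=0}^{j−1} (−1)^k (d/dt)^k[∂_{q⁽ʲ⁾}L] · ∂_λ q_λ⁽ʲ⁻ᵏ⁻¹⁾|_{λ=0}
  − ∫_{t₀}^t ∂_λ L|_{λ=0} ds` is constant. -/
theorem stmt_9 {n N : ℕ}
    (L : ℝ → (Fin (N + 1) → EuclideanSpace ℝ (Fin n)) → ℝ)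
    (hL : ContDiff ℝ (⊤ : ℕ∞)
      (fun p : ℝ × (Fin (N + 1) → EuclideanSpace ℝ (Fin n)) => L p.1 p.2))
    (q : ℝ → EuclideanSpace ℝ (Fin n)) (hq : ContDiff ℝ (⊤ : ℕ∞) q)
    (hEL : ∀ t : ℝ,
      ∑ k : Fin (N + 1), ((-1 : ℝ) ^ (k : ℕ)) • iteratedDeriv (k : ℕ) (pgrad L q k) t = 0)
    (Q : ℝ → ℝ → EuclideanSpace ℝ (Fin n))
    (hQ : ContDiff ℝ (⊤ : ℕ∞) (fun p : ℝ × ℝ => Q p.1 p.2))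
    (hQ0 : Q 0 = q)
    (t₀ : ℝ) :
    ∃ c : ℝ, ∀ t : ℝ,
      (∑ j : Fin (N + 1), ∑ k ∈ Finset.range (j : ℕ),
        (-1 : ℝ) ^ k *
          ⟪iteratedDeriv k (pgrad L q j) t,
            deriv (fun l => iteratedDeriv ((j : ℕ) - k - 1) (Q l) t) 0⟫)
      - (∫ s in t₀..t,
          deriv (fun l => L s (fun i : Fin (N + 1) => iteratedDeriv (i : ℕ) (Q l) s)) 0)
      = c := by
  subst hQ0
  set S : ℝ → ℝ := fun t => ∑ j : Fin (N + 1), ∑ k ∈ range (j : ℕ),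
    (-1 : ℝ) ^ k * ⟪iteratedDeriv k (pgrad L (Q 0) j) t, variation Q (j - k - 1) t⟫
  set g : ℝ → ℝ := fun t => ∑ j : Fin (N + 1), ⟪pgrad L (Q 0) j t, variation Q j t⟫
  have hS : ∀ t, HasDerivAt S (g t) t := fun t => by
    have h := HasDerivAt.fun_sum fun j (_ : j ∈ univ) =>
      hasDerivAt_sum_alternating_inner (hasDerivAt_iteratedDeriv (contDiff_pgrad hL hq j))
        (hasDerivAt_variation hQ) j t
    have hboundary : ∑ j : Fin (N + 1), (-1 : ℝ) ^ (j : ℕ) *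
        ⟪iteratedDeriv j (pgrad L (Q 0) j) t, variation Q 0 t⟫ = 0 := by
      simp_rw [← real_inner_smul_left, ← sum_inner, hEL t, inner_zero_left]
    simpa only [sum_sub_distrib, hboundary, sub_zero, iteratedDeriv_zero] using h
  have hg : Continuous g := continuous_finsetSum _ fun j _ =>
    (contDiff_pgrad hL hq j).continuous.inner
      (continuous_iff_continuousAt.2 fun t => (hasDerivAt_variation hQ j t).continuousAt)
  refine ⟨S t₀, fun t => ?_⟩
  have hint : ∫ s in t₀..t, g s = S t - S t₀ :=
    intervalIntegral.integral_eq_sub_of_hasDerivAt (fun s _ => hS s) (hg.intervalIntegrable _ _)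
  have hlag :
      (fun s => deriv (fun l => L s (fun i : Fin (N + 1) => iteratedDeriv i (Q l) s)) 0) = g :=
    funext (deriv_lagrangian_eq_sum_inner_variation hL hQ)
  rw [hlag, hint]
  exact sub_sub_cancel (S t) (S t₀)
end

section
/- Let w₁, w₂ > 0 and q : ℝ → ℝ be a smooth solution of q⁽⁴⁾ + (w₁² + w₂²) q̈ + w₁²w₂² q = 0. Then K₂(t) = (1/2)[ (w₁⁴ + w₁²w₂² + w₂⁴) q̇(t)² + q⁽³⁾(t)² + 2w₁²w₂² q(t) q̈(t) + (w₁² + w₂²)( 2 q⁽³⁾(t) q̇(t) + w₁²w₂² q(t)² ) ] is constant in t. -/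
/-!
Write the Pais–Uhlenbeck equation as `q⁽⁴⁾ + a q̈ + b q = 0` with `a = w₁² + w₂²`,
`b = w₁² w₂²`, so that `w₁⁴ + w₁² w₂² + w₂⁴ = a² - b`. With the momentum `p = q⁽³⁾ + a q̇`
one has `K₂ = ½ p² + ½ b (2 q q̈ - q̇² + a q²)`, and differentiating gives
`K̇₂ = p (q⁽⁴⁾ + a q̈ + b q)`, which vanishes along solutions.
-/

open scoped ContDiff

theorem ContDiff.hasDerivAt_iteratedDeriv {𝕜 F : Type*} [NontriviallyNormedField 𝕜]
    [NormedAddCommGroup F] [NormedSpace 𝕜 F] {f : 𝕜 → F} (hf : ContDiff 𝕜 ∞ f) (n : ℕ)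
    (x : 𝕜) : HasDerivAt (iteratedDeriv n f) (iteratedDeriv (n + 1) f x) x := by
  rw [iteratedDeriv_succ]
  exact ((hf.differentiable_iteratedDeriv n (mod_cast ENat.natCast_lt_top n)) x).hasDerivAt

namespace PaisUhlenbeck

noncomputable def firstIntegral (a b : ℝ) (q : ℝ → ℝ) (t : ℝ) : ℝ :=
  (1 / 2) * ((a ^ 2 - b) * iteratedDeriv 1 q t ^ 2 + iteratedDeriv 3 q t ^ 2
    + 2 * b * q t * iteratedDeriv 2 q t
    + a * (2 * iteratedDeriv 3 q t * iteratedDeriv 1 q t + b * q t ^ 2))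

theorem hasDerivAt_firstIntegral (a b : ℝ) {q : ℝ → ℝ} (hq : ContDiff ℝ ∞ q) (t : ℝ) :
    HasDerivAt (firstIntegral a b q)
      ((iteratedDeriv 3 q t + a * iteratedDeriv 1 q t)
        * (iteratedDeriv 4 q t + a * iteratedDeriv 2 q t + b * q t)) t := by
  have hq₀ : HasDerivAt q (iteratedDeriv 1 q t) t := by
    simpa only [iteratedDeriv_zero] using hq.hasDerivAt_iteratedDeriv 0 t
  have hq₁ := hq.hasDerivAt_iteratedDeriv 1 t
  have hq₂ := hq.hasDerivAt_iteratedDeriv 2 t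
  have hq₃ := hq.hasDerivAt_iteratedDeriv 3 t
  have hK := ((((hq₁.pow 2).const_mul (a ^ 2 - b)).add (hq₃.pow 2)).add
    ((hq₀.const_mul (2 * b)).mul hq₂)).add
    ((((hq₃.const_mul 2).mul hq₁).add ((hq₀.pow 2).const_mul b)).const_mul a)
  exact (hK.const_mul (1 / 2)).congr_deriv (by push_cast; ring)

theorem firstIntegral_eq (a b : ℝ) {q : ℝ → ℝ} (hq : ContDiff ℝ ∞ q)
    (hEL : ∀ t, iteratedDeriv 4 q t + a * iteratedDeriv 2 q t + b * q t = 0) (s t : ℝ) :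
    firstIntegral a b q s = firstIntegral a b q t :=
  is_const_of_deriv_eq_zero (fun t ↦ (hasDerivAt_firstIntegral a b hq t).differentiableAt)
    (fun t ↦ by rw [(hasDerivAt_firstIntegral a b hq t).deriv, hEL, mul_zero]) s t

end PaisUhlenbeck

theorem stmt_12_general
    (w₁ w₂ : ℝ)
    (q : ℝ → ℝ) (hq : ContDiff ℝ (⊤ : ℕ∞) q)
    (hEL : ∀ t : ℝ,
      iteratedDeriv 4 q t + (w₁ ^ 2 + w₂ ^ 2) * iteratedDeriv 2 q t
        + w₁ ^ 2 * w₂ ^ 2 * q t = 0) :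
    ∃ c : ℝ, ∀ t : ℝ,
      (1 / 2) * ((w₁ ^ 4 + w₁ ^ 2 * w₂ ^ 2 + w₂ ^ 4) * (deriv q t) ^ 2
        + (iteratedDeriv 3 q t) ^ 2
        + 2 * w₁ ^ 2 * w₂ ^ 2 * q t * iteratedDeriv 2 q t
        + (w₁ ^ 2 + w₂ ^ 2) * (2 * iteratedDeriv 3 q t * deriv q t
            + w₁ ^ 2 * w₂ ^ 2 * (q t) ^ 2)) = c := by
  refine ⟨PaisUhlenbeck.firstIntegral (w₁ ^ 2 + w₂ ^ 2) (w₁ ^ 2 * w₂ ^ 2) q 0, fun t ↦ ?_⟩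
  rw [← PaisUhlenbeck.firstIntegral_eq _ _ hq hEL t, PaisUhlenbeck.firstIntegral,
    iteratedDeriv_one]
  ring

/-- Second first integral of the Pais–Uhlenbeck oscillator, obtained from
nonlocal space-change perturbations. -/
theorem stmt_12
    (w₁ w₂ : ℝ) (hw₁ : 0 < w₁) (hw₂ : 0 < w₂)
    (q : ℝ → ℝ) (hq : ContDiff ℝ (⊤ : ℕ∞) q)
    (hEL : ∀ t : ℝ,
      iteratedDeriv 4 q t + (w₁ ^ 2 + w₂ ^ 2) * iteratedDeriv 2 q t
        + w₁ ^ 2 * w₂ ^ 2 * q t = 0) :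
    ∃ c : ℝ, ∀ t : ℝ,
      (1 / 2) * ((w₁ ^ 4 + w₁ ^ 2 * w₂ ^ 2 + w₂ ^ 4) * (deriv q t) ^ 2
        + (iteratedDeriv 3 q t) ^ 2
        + 2 * w₁ ^ 2 * w₂ ^ 2 * q t * iteratedDeriv 2 q t
        + (w₁ ^ 2 + w₂ ^ 2) * (2 * iteratedDeriv 3 q t * deriv q t
            + w₁ ^ 2 * w₂ ^ 2 * (q t) ^ 2)) = c :=
  stmt_12_general w₁ w₂ q hq hEL
end
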